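/- Picard iteration of the RAG operator converges geometrically to its fixed point: if D^π is the bounded fixed point of T and D₀ : S × S → ℝ is any bounded function, then for every n ≥ 0, ‖Tⁿ D₀ − D^π‖_∞ ≤ γⁿ·‖D₀ − D^π‖_∞; consequently the iterates Tⁿ D₀ converge uniformly to D^π as n → ∞. -/

import Mathlib

/-!
The cost term of `ragT` does not depend on `D`, so `ragT D - ragT D'` is `γ` times an average of
`D - D'` under the product weights `π(aᵢ|sᵢ)·π(aⱼ|sⱼ)`. Hence `ragT` is a `γ`-contraction for the
sup distance, and iterating it from `D₀` while `D^π` stays fixed gives the geometric bound, which in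
turn gives uniform convergence since `γⁿ → 0`.
-/

open Finset Filter

/-- The RAG operator: `(T D)(s_i, s_j) = c(s_i, s_j) + γ · Σ_{a_i} Σ_{a_j}
π(a_i|s_i)·π(a_j|s_j)·D(g(s_i,a_i), g(s_j,a_j))`, where
`c(s_i, s_j) = |Σ_a π(a|s_i)·r(s_i,a) − Σ_a π(a|s_j)·r(s_j,a)|`. -/
noncomputable def ragT {S A : Type*} [Fintype A] (γ : ℝ) (pol : S → A → ℝ)
    (r : S → A → ℝ) (g : S → A → S) (D : S × S → ℝ) : S × S → ℝ :=
  fun p =>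
    |(∑ a, pol p.1 a * r p.1 a) - (∑ a, pol p.2 a * r p.2 a)| +
      γ * ∑ ai, ∑ aj, pol p.1 ai * pol p.2 aj * D (g p.1 ai, g p.2 aj)

open Topology

lemma abs_sum_mul_le_of_sum_eq_one {ι : Type*} [Fintype ι] {w x : ι → ℝ} {B : ℝ}
    (hw0 : ∀ i, 0 ≤ w i) (hw1 : ∑ i, w i = 1) (hx : ∀ i, |x i| ≤ B) :
    |∑ i, w i * x i| ≤ B :=
  calc |∑ i, w i * x i| ≤ ∑ i, |w i * x i| := abs_sum_le_sum_abs _ _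
    _ ≤ ∑ i, w i * B := sum_le_sum fun i _ => by
        rw [abs_mul, abs_of_nonneg (hw0 i)]
        exact mul_le_mul_of_nonneg_left (hx i) (hw0 i)
    _ = B := by rw [← sum_mul, hw1, one_mul]

lemma tendstoUniformly_of_dist_le {ι α β : Type*} [PseudoMetricSpace β] {l : Filter ι}
    {F : ι → α → β} {f : α → β} {b : ι → ℝ} (hb : Tendsto b l (𝓝 0))
    (h : ∀ i x, dist (f x) (F i x) ≤ b i) : TendstoUniformly F f l := by
  rw [Metric.tendstoUniformly_iff]
  intro ε hε
  filter_upwards [hb.eventually (gt_mem_nhds hε)] with i hi x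
  exact (h i x).trans_lt hi

section ragT

variable {S A : Type*} [Fintype A] {γ : ℝ} {pol r : S → A → ℝ} {g : S → A → S}

lemma ragT_sub_ragT (D D' : S × S → ℝ) (p : S × S) :
    ragT γ pol r g D p - ragT γ pol r g D' p =
      γ * ∑ ai, pol p.1 ai *
        ∑ aj, pol p.2 aj * (D (g p.1 ai, g p.2 aj) - D' (g p.1 ai, g p.2 aj)) := by
  simp only [ragT, mul_sub, sum_sub_distrib, mul_sum, mul_assoc]
  ring

lemma abs_ragT_sub_ragT_le (hγ0 : 0 ≤ γ) (hpol0 : ∀ s a, 0 ≤ pol s a)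
    (hpol1 : ∀ s, ∑ a, pol s a = 1) {D D' : S × S → ℝ} {B : ℝ} (h : ∀ p, |D p - D' p| ≤ B)
    (p : S × S) : |ragT γ pol r g D p - ragT γ pol r g D' p| ≤ γ * B := by
  rw [ragT_sub_ragT, abs_mul, abs_of_nonneg hγ0]
  refine mul_le_mul_of_nonneg_left ?_ hγ0
  exact abs_sum_mul_le_of_sum_eq_one (hpol0 _) (hpol1 _) fun _ =>
    abs_sum_mul_le_of_sum_eq_one (hpol0 _) (hpol1 _) fun _ => h _

lemma abs_iterate_ragT_sub_iterate_le (hγ0 : 0 ≤ γ) (hpol0 : ∀ s a, 0 ≤ pol s a)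
    (hpol1 : ∀ s, ∑ a, pol s a = 1) {D D' : S × S → ℝ} {B : ℝ} (h : ∀ p, |D p - D' p| ≤ B)
    (n : ℕ) (p : S × S) :
    |(ragT γ pol r g)^[n] D p - (ragT γ pol r g)^[n] D' p| ≤ γ ^ n * B := by
  induction n generalizing p with
  | zero => simpa using h p
  | succ n ih =>
    rw [Function.iterate_succ_apply', Function.iterate_succ_apply', pow_succ', mul_assoc]
    exact abs_ragT_sub_ragT_le hγ0 hpol0 hpol1 ih p

end ragT

theorem ragT_picard_iteration_general {S A : Type*} [Fintype A]
    (γ : ℝ) (hγ0 : 0 ≤ γ) (hγ1 : γ < 1)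
    (pol : S → A → ℝ) (hpol0 : ∀ s a, 0 ≤ pol s a) (hpol1 : ∀ s, ∑ a, pol s a = 1)
    (r : S → A → ℝ)
    (g : S → A → S)
    (Dpi : S × S → ℝ) (hDpi : BddAbove (Set.range fun p : S × S => |Dpi p|))
    (hfix : ragT γ pol r g Dpi = Dpi)
    (D₀ : S × S → ℝ) (hD₀ : BddAbove (Set.range fun p : S × S => |D₀ p|)) :
    (∀ n : ℕ, (⨆ p : S × S, |(ragT γ pol r g)^[n] D₀ p - Dpi p|) ≤
        γ ^ n * ⨆ p : S × S, |D₀ p - Dpi p|) ∧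
      TendstoUniformly (fun n : ℕ => (ragT γ pol r g)^[n] D₀) Dpi atTop := by
  obtain ⟨C₀, hC₀⟩ := hD₀
  obtain ⟨C₁, hC₁⟩ := hDpi
  have hbdd : BddAbove (Set.range fun p : S × S => |D₀ p - Dpi p|) :=
    ⟨C₀ + C₁, Set.forall_mem_range.2 fun p =>
      (abs_sub _ _).trans (add_le_add (hC₀ ⟨p, rfl⟩) (hC₁ ⟨p, rfl⟩))⟩
  set M := ⨆ p : S × S, |D₀ p - Dpi p|
  have hM0 : 0 ≤ M := Real.iSup_nonneg fun _ => abs_nonneg _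
  have hdist : ∀ n p, |(ragT γ pol r g)^[n] D₀ p - Dpi p| ≤ γ ^ n * M := fun n p => by
    rw [← Function.iterate_fixed hfix n]
    exact abs_iterate_ragT_sub_iterate_le hγ0 hpol0 hpol1 (fun p => le_ciSup hbdd p) n p
  refine ⟨fun n => Real.iSup_le (hdist n) (by positivity), ?_⟩
  refine tendstoUniformly_of_dist_le (b := fun n => γ ^ n * M) ?_ fun n p => ?_
  · simpa using (tendsto_pow_atTop_nhds_zero_of_lt_one hγ0 hγ1).mul_const M
  · rw [Real.dist_eq, abs_sub_comm]
    exact hdist n p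

/-- Picard iteration of the RAG operator converges geometrically to its bounded
fixed point: `‖Tⁿ D₀ − D^π‖_∞ ≤ γⁿ·‖D₀ − D^π‖_∞` for every `n`, and the
iterates converge uniformly to `D^π`. -/
theorem ragT_picard_iteration {S A : Type*} [Nonempty S] [Fintype A] [Nonempty A]
    (γ : ℝ) (hγ0 : 0 ≤ γ) (hγ1 : γ < 1)
    (pol : S → A → ℝ) (hpol0 : ∀ s a, 0 ≤ pol s a) (hpol1 : ∀ s, ∑ a, pol s a = 1)
    (r : S → A → ℝ) (hr : BddAbove (Set.range fun q : S × A => |r q.1 q.2|))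
    (g : S → A → S)
    (Dpi : S × S → ℝ) (hDpi : BddAbove (Set.range fun p : S × S => |Dpi p|))
    (hfix : ragT γ pol r g Dpi = Dpi)
    (D₀ : S × S → ℝ) (hD₀ : BddAbove (Set.range fun p : S × S => |D₀ p|)) :
    (∀ n : ℕ, (⨆ p : S × S, |(ragT γ pol r g)^[n] D₀ p - Dpi p|) ≤
        γ ^ n * ⨆ p : S × S, |D₀ p - Dpi p|) ∧
      TendstoUniformly (fun n : ℕ => (ragT γ pol r g)^[n] D₀) Dpi atTop :=
  ragT_picard_iteration_general γ hγ0 hγ1 pol hpol0 hpol1 r g Dpi hDpi hfix D₀ hD₀
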